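/- For 0 < q < 1 and any m ≤ m', the subspace V_{m'} is a two-sided ideal of the subalgebra V_m of A(SU_q(2)); in particular each V_m (m ≥ 1) is a two-sided *-ideal of A(SU_q(2)). -/

import Mathlib

noncomputable section

namespace QAlg

/-- Generators of a free *-algebra: `inl i` is the generator `z i`, and
`inr i` is its formal adjoint `(z i)*`. -/
abbrev Gen (X : Type) := X ⊕ X

/-- The free algebra on the doubled generating set, realized as the monoid
algebra of the free monoid. -/
abbrev F (X : Type) := MonoidAlgebra ℂ (FreeMonoid (Gen X))

/-- The *-operation on words: reverse the word and exchange the two copies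
of the generators. -/
def wordStar {X : Type} (w : FreeMonoid (Gen X)) : FreeMonoid (Gen X) :=
  FreeMonoid.ofList (((FreeMonoid.toList w).map Sum.swap).reverse)

lemma wordStar_mul {X : Type} (w v : FreeMonoid (Gen X)) :
    wordStar (w * v) = wordStar v * wordStar w := by
  simp [wordStar, FreeMonoid.toList_mul, FreeMonoid.ofList_append]

lemma wordStar_wordStar {X : Type} (w : FreeMonoid (Gen X)) : wordStar (wordStar w) = w := by
  simp [wordStar, List.map_reverse, List.map_map, Sum.swap_swap_eq]

/-- The canonical conjugate-linear antimultiplicative involution on the free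
algebra `F X`, determined by `star (z i) = (z i)*` and complex conjugation
on scalars. -/
def starF {X : Type} (f : F X) : F X :=
  Finsupp.sum f.coeff fun w c => MonoidAlgebra.single (wordStar w) ((starRingEnd ℂ) c)

lemma starF_single {X : Type} (w : FreeMonoid (Gen X)) (c : ℂ) :
    starF (MonoidAlgebra.single w c) = MonoidAlgebra.single (wordStar w) ((starRingEnd ℂ) c) := by
  classical
  rw [starF, MonoidAlgebra.coeff_single]
  refine Finsupp.sum_single_index ?_
  simp

lemma starF_zero {X : Type} : starF (0 : F X) = 0 := by
  rw [starF, MonoidAlgebra.coeff_zero]; exact Finsupp.sum_zero_index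

lemma starF_add {X : Type} (f g : F X) : starF (f + g) = starF f + starF g := by
  classical
  rw [starF, starF, starF, MonoidAlgebra.coeff_add]
  refine Finsupp.sum_add_index' (fun w => by simp) (fun w c₁ c₂ => by
    simp [map_add, MonoidAlgebra.single_add])

lemma starF_single_mul {X : Type} (w : FreeMonoid (Gen X)) (c : ℂ) (g : F X) :
    starF (MonoidAlgebra.single w c * g) = starF g * starF (MonoidAlgebra.single w c) := by
  classical
  induction g using MonoidAlgebra.induction with
  | zero => simp [starF_zero]
  | single_add v d g _ _ ihg =>
    rw [mul_add, starF_add, starF_add, add_mul, ihg]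
    congr 1
    rw [MonoidAlgebra.single_mul_single, starF_single, starF_single, starF_single,
      MonoidAlgebra.single_mul_single, wordStar_mul, map_mul, mul_comm]

lemma starF_mul {X : Type} (f g : F X) : starF (f * g) = starF g * starF f := by
  classical
  induction f using MonoidAlgebra.induction with
  | zero => simp [starF_zero]
  | single_add w c f _ _ ih =>
    rw [add_mul, starF_add, starF_add, ih, mul_add, starF_single_mul]

lemma starF_starF {X : Type} (f : F X) : starF (starF f) = f := by
  classical
  induction f using MonoidAlgebra.induction with
  | zero => simp [starF_zero]
  | single_add w c f _ _ ih =>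
    rw [starF_add, starF_add, ih, starF_single, starF_single, wordStar_wordStar,
      Complex.conj_conj]

/-- The free *-algebra structure on `F X`. -/
def starRingF (X : Type) : StarRing (F X) where
  star := starF
  star_involutive := starF_starF
  star_mul := starF_mul
  star_add := starF_add

/-- The generator `z i` inside the free *-algebra. -/
def zF {X : Type} (i : X) : F X := MonoidAlgebra.of ℂ _ (FreeMonoid.of (Sum.inl i))

/-- The formal adjoint `(z i)*` inside the free *-algebra. -/
def zsF {X : Type} (i : X) : F X := MonoidAlgebra.of ℂ _ (FreeMonoid.of (Sum.inr i))

/-- The defining relations of quantum `SU(2)` (with `zF 0 = α`, `zF 1 = β`,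
`zsF i` playing the role of the adjoint generators), together with their
images under the *-operation. -/
inductive surel (q : ℝ) : F (Fin 2) → F (Fin 2) → Prop
  | r1 : surel q (zF 1 * zF 0) ((q : ℂ) • (zF 0 * zF 1))
  | r2 : surel q (zsF 1 * zF 0) ((q : ℂ) • (zF 0 * zsF 1))
  | r3 : surel q (zF 1 * zsF 1) (zsF 1 * zF 1)
  | r4 : surel q (zF 0 * zsF 0 + zF 1 * zsF 1) 1
  | r5 : surel q (zsF 0 * zF 0 + ((q ^ 2 : ℝ) : ℂ) • (zF 1 * zsF 1)) 1
  | star_rel {a b} : surel q a b → surel q (starF a) (starF b)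

/-- The coordinate *-algebra `A(SU_q(2))`. -/
abbrev SU (q : ℝ) := RingQuot (surel q)

noncomputable instance (q : ℝ) : StarRing (SU q) :=
  @RingQuot.starRing _ _ (starRingF _) (surel q) (fun _ _ h => surel.star_rel h)

/-- The generator `α` of `A(SU_q(2))`. -/
def αg (q : ℝ) : SU q := RingQuot.mkAlgHom ℂ (surel q) (zF 0)

/-- The generator `β` of `A(SU_q(2))`. -/
def βg (q : ℝ) : SU q := RingQuot.mkAlgHom ℂ (surel q) (zF 1)

/-- The elements `e_{j,k,l}` of `A(SU_q(2))`: `α^j β^k (β*)^l` for `j ≥ 0`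
and `β^k (β*)^l (α*)^{-j}` for `j < 0`. -/
def e (q : ℝ) (j : ℤ) (k l : ℕ) : SU q :=
  if 0 ≤ j then αg q ^ j.toNat * βg q ^ k * star (βg q) ^ l
  else βg q ^ k * star (βg q) ^ l * star (αg q) ^ (-j).toNat

/-- The subspace `V_m ⊆ A(SU_q(2))` spanned by the `e_{j,k,l}` with `k + l ≥ m`. -/
def V (q : ℝ) (m : ℕ) : Submodule ℂ (SU q) :=
  Submodule.span ℂ {x | ∃ (j : ℤ) (k l : ℕ), m ≤ k + l ∧ x = e q j k l}

/-!
Each of `α, β, α*, β*` can be moved to the right past the factors of a monomial `e_{j,k,l}` at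
the cost of a power of `q` (passing `α` over `β` or `β*` divides by `q`), and the products
`αα*`, `α*α` that appear are eliminated by `αα* + ββ* = 1`, `α*α + q²ββ* = 1`. None of this lowers
`k + l`, so left multiplication by a generator, hence by any element, preserves `V_m`. As
`(e_{j,k,l})* = e_{-j,l,k}`, `V_m` is `*`-closed, so it is a right ideal too.
-/

def QCommute {R A : Type*} [SMul R A] [Mul A] (c : R) (a b : A) : Prop :=
  a * b = c • (b * a)

namespace QCommute

variable {R A : Type*} [CommSemiring R] [Semiring A] [Algebra R A] {c : R} {a b : A}

theorem left_comm (h : QCommute c a b) (z : A) : a * (b * z) = c • (b * (a * z)) := by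
  rw [← mul_assoc, h, smul_mul_assoc, mul_assoc]

theorem pow_right (h : QCommute c a b) : ∀ n : ℕ, QCommute (c ^ n) a (b ^ n)
  | 0 => by simp [QCommute]
  | n + 1 => by
    rw [QCommute, pow_succ', pow_succ', h.left_comm, pow_right h n, mul_smul_comm, smul_smul,
      mul_assoc]

theorem pow_left (h : QCommute c a b) : ∀ n : ℕ, QCommute (c ^ n) (a ^ n) b
  | 0 => by simp [QCommute]
  | n + 1 => by
    rw [QCommute, pow_succ, pow_succ, mul_assoc, h, mul_smul_comm, ← mul_assoc, pow_left h n,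
      smul_mul_assoc, smul_smul, mul_assoc, mul_comm c]

theorem symm {K : Type*} [Field K] [Algebra K A] {c : K} (h : QCommute c a b) (hc : c ≠ 0) :
    QCommute c⁻¹ b a := by
  rw [QCommute, h, inv_smul_smul₀ hc]

theorem star [StarRing R] [StarRing A] [StarModule R A] (h : QCommute c a b) :
    QCommute (star c) (star b) (star a) := by
  rw [QCommute, ← star_mul, h, star_smul, star_mul]

end QCommute

theorem Submodule.mul_mem_of_generator_mul_mem {R A X : Type*} [CommSemiring R] [Semiring A]
    [Algebra R A] (φ : MonoidAlgebra R (FreeMonoid X) →ₐ[R] A) (hφ : Function.Surjective φ)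
    (p : Submodule R A) (hp : ∀ i, ∀ y ∈ p, φ (MonoidAlgebra.of R _ (FreeMonoid.of i)) * y ∈ p)
    (a : A) {y : A} (hy : y ∈ p) : a * y ∈ p := by
  obtain ⟨f, rfl⟩ := hφ a
  induction f using MonoidAlgebra.induction_on generalizing y with
  | of w =>
    induction w using FreeMonoid.inductionOn' generalizing y with
    | one => rwa [map_one, map_one, one_mul]
    | of_mul i w ih => rw [map_mul, map_mul, mul_assoc]; exact hp i _ (ih hy)
  | add f g hf hg => rw [map_add, add_mul]; exact p.add_mem (hf hy) (hg hy)
  | smul r f hf => rw [map_smul, smul_mul_assoc]; exact p.smul_mem r (hf hy)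

theorem starF_of {X : Type} (g : Gen X) :
    starF (MonoidAlgebra.of ℂ _ (FreeMonoid.of g)) =
      MonoidAlgebra.of ℂ _ (FreeMonoid.of g.swap) := by
  rw [MonoidAlgebra.of_apply, MonoidAlgebra.of_apply, starF_single, map_one]
  rfl

theorem starF_algebraMap {X : Type} (c : ℂ) :
    starF (algebraMap ℂ (F X) c) = algebraMap ℂ (F X) (star c) := by
  rw [MonoidAlgebra.coe_algebraMap, Function.comp_apply, Function.comp_apply, starF_single]
  rfl

section SU
variable (q : ℝ)

theorem star_mkAlgHom (f : F (Fin 2)) :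
    star (RingQuot.mkAlgHom ℂ (surel q) f) = RingQuot.mkAlgHom ℂ (surel q) (starF f) := by
  simp only [RingQuot.mkAlgHom_def, RingQuot.mkRingHom_def]
  rfl

instance : StarModule ℂ (SU q) where
  star_smul c x := by
    rw [Algebra.smul_def, Algebra.smul_def, star_mul, ← (RingQuot.mkAlgHom ℂ (surel q)).commutes,
      star_mkAlgHom, starF_algebraMap, AlgHom.commutes, Algebra.commutes]

theorem mkAlgHom_zsF (i : Fin 2) :
    RingQuot.mkAlgHom ℂ (surel q) (zsF i) = star (RingQuot.mkAlgHom ℂ (surel q) (zF i)) := by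
  rw [star_mkAlgHom, zF, starF_of]
  rfl

theorem qCommute_βg_αg : QCommute (q : ℂ) (βg q) (αg q) := by
  simpa only [αg, βg, QCommute, map_mul, map_smul] using
    RingQuot.mkAlgHom_rel ℂ (surel.r1 (q := q))

theorem qCommute_star_βg_αg : QCommute (q : ℂ) (star (βg q)) (αg q) := by
  simpa only [αg, βg, QCommute, map_mul, map_smul, mkAlgHom_zsF] using
    RingQuot.mkAlgHom_rel ℂ (surel.r2 (q := q))

theorem commute_βg_star_βg : Commute (βg q) (star (βg q)) := by
  simpa only [βg, Commute, SemiconjBy, map_mul, mkAlgHom_zsF] using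
    RingQuot.mkAlgHom_rel ℂ (surel.r3 (q := q))

theorem αg_mul_star_αg : αg q * star (αg q) = 1 - βg q * star (βg q) := by
  rw [eq_sub_iff_add_eq]
  simpa only [αg, βg, map_add, map_mul, map_one, mkAlgHom_zsF] using
    RingQuot.mkAlgHom_rel ℂ (surel.r4 (q := q))

theorem star_αg_mul_αg : star (αg q) * αg q = 1 - (q : ℂ) ^ 2 • (βg q * star (βg q)) := by
  rw [eq_sub_iff_add_eq]
  simpa only [αg, βg, map_add, map_mul, map_smul, map_one, mkAlgHom_zsF, Complex.ofReal_pow] using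
    RingQuot.mkAlgHom_rel ℂ (surel.r5 (q := q))

theorem qCommute_star_αg_star_βg : QCommute (q : ℂ) (star (αg q)) (star (βg q)) := by
  simpa only [Complex.star_def, Complex.conj_ofReal] using (qCommute_βg_αg q).star

theorem qCommute_star_αg_βg : QCommute (q : ℂ) (star (αg q)) (βg q) := by
  simpa only [Complex.star_def, Complex.conj_ofReal, star_star] using (qCommute_star_βg_αg q).star

theorem e_natCast (n k l : ℕ) : e q n k l = αg q ^ n * βg q ^ k * star (βg q) ^ l := by
  simp [e]

theorem e_neg_natCast (n k l : ℕ) :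
    e q (-n) k l = βg q ^ k * star (βg q) ^ l * star (αg q) ^ n := by
  rcases n.eq_zero_or_pos with rfl | hn
  · simp [e]
  · simp [e, hn.ne']

theorem star_e (j : ℤ) (k l : ℕ) : star (e q j k l) = e q (-j) l k := by
  obtain ⟨n, rfl | rfl⟩ := j.eq_nat_or_neg
  · simp only [e_natCast, e_neg_natCast, star_mul, star_pow, star_star, mul_assoc]
  · simp only [e_natCast, e_neg_natCast, neg_neg, star_mul, star_pow, star_star, mul_assoc]

variable {q} {j : ℤ} {k l : ℕ}

theorem αg_mul_e_of_nonneg (hj : 0 ≤ j) : αg q * e q j k l = e q (j + 1) k l := by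
  lift j to ℕ using hj
  rw [← Nat.cast_succ, e_natCast, e_natCast]
  simp only [mul_assoc, pow_succ']

theorem αg_mul_e_of_neg (hq : q ≠ 0) (hj : j < 0) :
    αg q * e q j k l =
      ((q : ℂ) ^ (k + l))⁻¹ • (e q (j + 1) k l - e q (j + 1) (k + 1) (l + 1)) := by
  obtain ⟨n, rfl⟩ : ∃ n : ℕ, j = -(n + 1 : ℕ) := ⟨(-j - 1).toNat, by omega⟩
  rw [show -((n + 1 : ℕ) : ℤ) + 1 = -n by push_cast; ring, e_neg_natCast, e_neg_natCast,
    e_neg_natCast]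
  have hq' : ∀ i : ℕ, (q : ℂ) ^ i ≠ 0 := fun i => pow_ne_zero i (Complex.ofReal_ne_zero.2 hq)
  simp only [mul_assoc, (((qCommute_βg_αg q).pow_left k).symm (hq' k)).left_comm,
    (((qCommute_star_βg_αg q).pow_left l).symm (hq' l)).left_comm]
  rw [pow_succ', ← mul_assoc (αg q), αg_mul_star_αg]
  simp only [sub_mul, one_mul, mul_sub, smul_sub, mul_smul_comm, smul_smul, mul_assoc, pow_succ,
    ((commute_βg_star_βg q).pow_right l).symm.left_comm, pow_add, mul_inv]

theorem βg_mul_e_of_nonneg (hj : 0 ≤ j) : βg q * e q j k l = (q : ℂ) ^ j • e q j (k + 1) l := by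
  lift j to ℕ using hj
  simp only [e_natCast, zpow_natCast, mul_assoc, ((qCommute_βg_αg q).pow_right _).left_comm,
    pow_succ']

theorem βg_mul_e_of_nonpos (hj : j ≤ 0) : βg q * e q j k l = e q j (k + 1) l := by
  obtain ⟨n, rfl⟩ := Int.exists_eq_neg_ofNat hj
  simp only [e_neg_natCast, mul_assoc, pow_succ']

theorem star_βg_mul_e_of_nonneg (hj : 0 ≤ j) :
    star (βg q) * e q j k l = (q : ℂ) ^ j • e q j k (l + 1) := by
  lift j to ℕ using hj
  simp only [e_natCast, zpow_natCast, mul_assoc, ((qCommute_star_βg_αg q).pow_right _).left_comm,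
    ((commute_βg_star_βg q).symm.pow_right _).left_comm, pow_succ']

theorem star_βg_mul_e_of_nonpos (hj : j ≤ 0) : star (βg q) * e q j k l = e q j k (l + 1) := by
  obtain ⟨n, rfl⟩ := Int.exists_eq_neg_ofNat hj
  simp only [e_neg_natCast, mul_assoc, ((commute_βg_star_βg q).symm.pow_right _).left_comm,
    pow_succ']

theorem star_αg_mul_e_of_nonpos (hj : j ≤ 0) :
    star (αg q) * e q j k l = (q : ℂ) ^ (k + l) • e q (j - 1) k l := by
  obtain ⟨n, rfl⟩ := Int.exists_eq_neg_ofNat hj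
  rw [show -(n : ℤ) - 1 = -((n + 1 : ℕ) : ℤ) by push_cast; ring]
  simp only [e_neg_natCast, mul_assoc, ((qCommute_star_αg_βg q).pow_right _).left_comm,
    ((qCommute_star_αg_star_βg q).pow_right _).left_comm, mul_smul_comm, smul_smul, pow_succ',
    pow_add]

theorem star_αg_mul_e_of_pos (hj : 0 < j) :
    star (αg q) * e q j k l =
      e q (j - 1) k l - (q : ℂ) ^ (2 * j) • e q (j - 1) (k + 1) (l + 1) := by
  obtain ⟨n, rfl⟩ : ∃ n : ℕ, j = (n + 1 : ℕ) := ⟨(j - 1).toNat, by omega⟩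
  rw [show ((n + 1 : ℕ) : ℤ) - 1 = n by push_cast; ring, e_natCast, e_natCast, e_natCast,
    show (2 : ℤ) * ((n + 1 : ℕ) : ℤ) = ((2 * n + 2 : ℕ) : ℤ) by push_cast; ring, zpow_natCast,
    pow_succ', mul_assoc, mul_assoc, ← mul_assoc (star (αg q)), star_αg_mul_αg]
  simp only [sub_mul, one_mul, smul_mul_assoc, mul_assoc,
    ((qCommute_βg_αg q).pow_right _).left_comm, ((qCommute_star_βg_αg q).pow_right _).left_comm,
    ((commute_βg_star_βg q).symm.pow_right _).left_comm, mul_smul_comm, smul_smul, pow_succ']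
  module

variable {m : ℕ}

theorem e_mem_V (h : m ≤ k + l) : e q j k l ∈ V q m :=
  Submodule.subset_span ⟨j, k, l, h, rfl⟩

theorem V_antitone : Antitone (V q) := fun _ _ h =>
  Submodule.span_mono fun _ ⟨j, k, l, hkl, hx⟩ => ⟨j, k, l, h.trans hkl, hx⟩

theorem star_mem_V {x : SU q} (hx : x ∈ V q m) : star x ∈ V q m := by
  refine (Submodule.span_le
    (p := (V q m).comap (starLinearEquiv ℂ (A := SU q)).toLinearMap)).2 ?_ hx
  rintro _ ⟨j, k, l, h, rfl⟩
  rw [SetLike.mem_coe, Submodule.mem_comap, LinearEquiv.coe_coe, starLinearEquiv_apply, star_e]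
  exact e_mem_V (by omega)

theorem generator_mul_mem_V (hq : q ≠ 0) (i : Gen (Fin 2)) {x : SU q} (hx : x ∈ V q m) :
    RingQuot.mkAlgHom ℂ (surel q) (MonoidAlgebra.of ℂ _ (FreeMonoid.of i)) * x ∈ V q m := by
  refine (Submodule.span_le (p := (V q m).comap (LinearMap.mulLeft ℂ _))).2 ?_ hx
  rintro _ ⟨j, k, l, h, rfl⟩
  have h₁ : m ≤ k + 1 + l := by omega
  have h₂ : m ≤ k + (l + 1) := by omega
  have h₃ : m ≤ k + 1 + (l + 1) := by omega
  rw [SetLike.mem_coe, Submodule.mem_comap, LinearMap.mulLeft_apply]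
  rcases i with i | i <;> fin_cases i
  · change αg q * e q j k l ∈ V q m
    rcases le_or_gt 0 j with hj | hj
    · rw [αg_mul_e_of_nonneg hj]; exact e_mem_V h
    · rw [αg_mul_e_of_neg hq hj]
      exact Submodule.smul_mem _ _ (sub_mem (e_mem_V h) (e_mem_V h₃))
  · change βg q * e q j k l ∈ V q m
    rcases le_or_gt 0 j with hj | hj
    · rw [βg_mul_e_of_nonneg hj]; exact Submodule.smul_mem _ _ (e_mem_V h₁)
    · rw [βg_mul_e_of_nonpos hj.le]; exact e_mem_V h₁
  · change RingQuot.mkAlgHom ℂ (surel q) (zsF 0) * _ ∈ _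
    rw [mkAlgHom_zsF]
    change star (αg q) * e q j k l ∈ V q m
    rcases le_or_gt j 0 with hj | hj
    · rw [star_αg_mul_e_of_nonpos hj]; exact Submodule.smul_mem _ _ (e_mem_V h)
    · rw [star_αg_mul_e_of_pos hj]
      exact sub_mem (e_mem_V h) (Submodule.smul_mem _ _ (e_mem_V h₃))
  · change RingQuot.mkAlgHom ℂ (surel q) (zsF 1) * _ ∈ _
    rw [mkAlgHom_zsF]
    change star (βg q) * e q j k l ∈ V q m
    rcases le_or_gt 0 j with hj | hj
    · rw [star_βg_mul_e_of_nonneg hj]; exact Submodule.smul_mem _ _ (e_mem_V h₂)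
    · rw [star_βg_mul_e_of_nonpos hj.le]; exact e_mem_V h₂

theorem mul_mem_V_left (hq : q ≠ 0) (a : SU q) {x : SU q} (hx : x ∈ V q m) : a * x ∈ V q m :=
  Submodule.mul_mem_of_generator_mul_mem _ (RingQuot.mkAlgHom_surjective ℂ (surel q)) _
    (fun i _ => generator_mul_mem_V hq i) a hx

theorem mul_mem_V_right (hq : q ≠ 0) (a : SU q) {x : SU q} (hx : x ∈ V q m) : x * a ∈ V q m := by
  simpa using star_mem_V (mul_mem_V_left hq (star a) (star_mem_V hx))

end SU

theorem V_isIdeal_general (q : ℝ) (hq0 : 0 < q) (m m' : ℕ) (h : m ≤ m') :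
    ((V q m' : Set (SU q)) ⊆ (V q m : Set (SU q))) ∧
    (∀ x ∈ V q m', ∀ y ∈ V q m, x * y ∈ V q m' ∧ y * x ∈ V q m') ∧
    (1 ≤ m' → ∀ a : SU q, ∀ x ∈ V q m',
      a * x ∈ V q m' ∧ x * a ∈ V q m' ∧ star x ∈ V q m') :=
  ⟨V_antitone h, fun _ hx y _ => ⟨mul_mem_V_right hq0.ne' y hx, mul_mem_V_left hq0.ne' y hx⟩,
    fun _ a _ hx => ⟨mul_mem_V_left hq0.ne' a hx, mul_mem_V_right hq0.ne' a hx, star_mem_V hx⟩⟩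

/-- For `0 < q < 1` and `m ≤ m'`, the subspace `V_{m'}` is a two-sided ideal
of the subalgebra `V_m` of `A(SU_q(2))`; in particular each `V_m` with
`m ≥ 1` is a two-sided *-ideal of `A(SU_q(2))`. -/
theorem V_isIdeal (q : ℝ) (hq0 : 0 < q) (hq1 : q < 1) (m m' : ℕ) (h : m ≤ m') :
    ((V q m' : Set (SU q)) ⊆ (V q m : Set (SU q))) ∧
    (∀ x ∈ V q m', ∀ y ∈ V q m, x * y ∈ V q m' ∧ y * x ∈ V q m') ∧
    (1 ≤ m' → ∀ a : SU q, ∀ x ∈ V q m',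
      a * x ∈ V q m' ∧ x * a ∈ V q m' ∧ star x ∈ V q m') :=
  V_isIdeal_general q hq0 m m' h

end QAlg
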